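/- For the solution ξ(ζ) = 2·arctan(e^ζ/√B), η(ζ) = ζ − ln(e^{2ζ} + B) with B > 0, the squared non-dimensional speed (ξ′)² + (η′)² equals 1 for all ζ. -/

import Mathlib

/-!
With `t = e^ζ / √B` one has `ξ' = 2t / (1 + t²)` and `η' = (1 - t²) / (1 + t²)`, i.e.
`(ξ', η') = (sin ξ, cos ξ)`: the half-angle parametrisation of the unit circle.
-/

open Real

theorem sq_add_sq_half_angle_eq_one (t : ℝ) :
    (2 * t / (1 + t ^ 2)) ^ 2 + ((1 - t ^ 2) / (1 + t ^ 2)) ^ 2 = 1 := by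
  have h : 1 + t ^ 2 ≠ 0 := by positivity
  field_simp
  ring

theorem hasDerivAt_two_mul_arctan_exp_div (c ζ : ℝ) :
    HasDerivAt (fun ζ => 2 * arctan (exp ζ / c))
      (2 * (exp ζ / c) / (1 + (exp ζ / c) ^ 2)) ζ := by
  refine (((hasDerivAt_exp ζ).div_const c).arctan.const_mul 2).congr_deriv ?_
  ring

theorem hasDerivAt_sub_log_exp_two_mul_add {B : ℝ} (hB : 0 < B) (ζ : ℝ) :
    HasDerivAt (fun ζ => ζ - log (exp (2 * ζ) + B))
      ((1 - (exp ζ / √B) ^ 2) / (1 + (exp ζ / √B) ^ 2)) ζ := by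
  have hexp : HasDerivAt (fun ζ => exp (2 * ζ) + B) (2 * exp (2 * ζ)) ζ := by
    simpa [mul_comm] using (((hasDerivAt_id ζ).const_mul 2).exp).add_const B
  refine ((hasDerivAt_id ζ).sub (hexp.log (by positivity))).congr_deriv ?_
  have hsqrt : √B ^ 2 = B := sq_sqrt hB.le
  rw [show exp (2 * ζ) = exp ζ ^ 2 by rw [← exp_nat_mul]; norm_num]
  field_simp
  rw [hsqrt]
  ring

/-- The explicit solution has unit non-dimensional speed: `(ξ′)² + (η′)² = 1`. -/
theorem explicit_solution_unit_speed
    (B : ℝ) (hB : 0 < B)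
    (ξ η : ℝ → ℝ)
    (hξ : ∀ ζ, ξ ζ = 2 * Real.arctan (Real.exp ζ / Real.sqrt B))
    (hη : ∀ ζ, η ζ = ζ - Real.log (Real.exp (2 * ζ) + B)) :
    ∀ ζ, (deriv ξ ζ) ^ 2 + (deriv η ζ) ^ 2 = 1 := by
  intro ζ
  rw [funext hξ, funext hη, (hasDerivAt_two_mul_arctan_exp_div _ ζ).deriv,
    (hasDerivAt_sub_log_exp_two_mul_add hB ζ).deriv]
  exact sq_add_sq_half_angle_eq_one _
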